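/- Take R = ℚ(u), the field of rational functions over ℚ in the variable u. Let f be a conjugation-invariant functional on TL_{1,2} with values in a ℚ(u)-vector space M satisfying f(tσ_1) = (−1/(u(1+u²)))·f(t). If moreover f(t) = u⁴·f(t_1), then f(t) = 0. -/

import Mathlib

/- Common setup: the mixed braid group `B_{1,n}`, the generalized Hecke algebra
of type B `H_{1,n}(u)`, and the generalized Temperley–Lieb algebra of type B
`TL_{1,n}`, following the paper's presentations. The generator `none` is `t`
and `some i` is `σ_{i+1}` for `i : Fin (n-1)`. -/

/-- Generators of the mixed braid group `B_{1,n}`: `none` is `t`,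
`some i` is `σ_{i+1}`. -/
abbrev B1Gen (n : ℕ) := Option (Fin (n - 1))

/-- The generator `t` in the free group. -/
def tF (n : ℕ) : FreeGroup (B1Gen n) := FreeGroup.of none

/-- The generator `σ_{i+1}` in the free group. -/
def sF (n : ℕ) (i : Fin (n - 1)) : FreeGroup (B1Gen n) := FreeGroup.of (some i)

/-- The relators of the mixed braid group `B_{1,n}`:
`σ₁tσ₁t = tσ₁tσ₁`; `tσ_i = σ_it` for `i > 1`; the braid relations
`σ_iσ_{i+1}σ_i = σ_{i+1}σ_iσ_{i+1}`; and `σ_iσ_j = σ_jσ_i` for `|i−j| > 1`. -/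
def mixedRels (n : ℕ) : Set (FreeGroup (B1Gen n)) :=
  { r | (∃ i : Fin (n - 1), (i : ℕ) = 0 ∧
          r = sF n i * tF n * sF n i * tF n * (tF n * sF n i * tF n * sF n i)⁻¹) ∨
        (∃ i : Fin (n - 1), 0 < (i : ℕ) ∧
          r = tF n * sF n i * (sF n i * tF n)⁻¹) ∨
        (∃ i j : Fin (n - 1), (j : ℕ) = (i : ℕ) + 1 ∧
          r = sF n i * sF n j * sF n i * (sF n j * sF n i * sF n j)⁻¹) ∨
        (∃ i j : Fin (n - 1), (i : ℕ) + 1 < (j : ℕ) ∧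
          r = sF n i * sF n j * (sF n j * sF n i)⁻¹) }

/-- The mixed braid group `B_{1,n}`. -/
abbrev MixedBraidGroup (n : ℕ) := PresentedGroup (mixedRels n)

/-- The generator `t` of `B_{1,n}`. -/
def tB (n : ℕ) : MixedBraidGroup n := PresentedGroup.of none

/-- The generator `σ_{i+1}` of `B_{1,n}`. -/
def sB (n : ℕ) (i : Fin (n - 1)) : MixedBraidGroup n := PresentedGroup.of (some i)

variable (R : Type) [CommRing R] (u : Rˣ)

/-- The quadratic Hecke relations `σ_i² = (u − u⁻¹)σ_i + 1` in the group
algebra `R[B_{1,n}]`. -/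
inductive heckeRel (n : ℕ) :
    MonoidAlgebra R (MixedBraidGroup n) → MonoidAlgebra R (MixedBraidGroup n) → Prop where
  | quad (i : Fin (n - 1)) :
      heckeRel n
        (MonoidAlgebra.of R (MixedBraidGroup n) (sB n i) *
          MonoidAlgebra.of R (MixedBraidGroup n) (sB n i))
        (((u : R) - ((u⁻¹ : Rˣ) : R)) • MonoidAlgebra.of R (MixedBraidGroup n) (sB n i) + 1)

/-- The generalized Hecke algebra of type B, `H_{1,n}(u)`. -/
abbrev Hecke (n : ℕ) := RingQuot (heckeRel R u n)

/-- The canonical (multiplicative) map `B_{1,n} → H_{1,n}(u)`. -/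
noncomputable def toHecke (n : ℕ) : MixedBraidGroup n →* Hecke R u n :=
  (RingQuot.mkRingHom (heckeRel R u n)).toMonoidHom.comp
    (MonoidAlgebra.of R (MixedBraidGroup n))

/-- The Temperley–Lieb relations: the generators
`1 + u(σ_i + σ_{i+1}) + u²(σ_iσ_{i+1} + σ_{i+1}σ_i) + u³σ_iσ_{i+1}σ_i`
of the defining ideal are set to `0`. -/
inductive tlRel (n : ℕ) : Hecke R u n → Hecke R u n → Prop where
  | cubic (i j : Fin (n - 1)) (hij : (j : ℕ) = (i : ℕ) + 1) :
      tlRel n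
        (1 + (u : R) • (toHecke R u n (sB n i) + toHecke R u n (sB n j))
          + ((u : R) ^ 2) • (toHecke R u n (sB n i) * toHecke R u n (sB n j)
              + toHecke R u n (sB n j) * toHecke R u n (sB n i))
          + ((u : R) ^ 3) •
              (toHecke R u n (sB n i) * toHecke R u n (sB n j) * toHecke R u n (sB n i)))
        0

/-- The generalized Temperley–Lieb algebra of type B, `TL_{1,n}`. -/
abbrev TL (n : ℕ) := RingQuot (tlRel R u n)

/-- The canonical (multiplicative) map `B_{1,n} → TL_{1,n}`. -/
noncomputable def toTL (n : ℕ) : MixedBraidGroup n →* TL R u n :=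
  (RingQuot.mkRingHom (tlRel R u n)).toMonoidHom.comp (toHecke R u n)

/-- The element `t` of `TL_{1,n}`. -/
noncomputable def tT (n : ℕ) : TL R u n := toTL R u n (tB n)

/-- The element `σ₁` of `TL_{1,n}` (needs `2 ≤ n`). -/
noncomputable def σ₁T (n : ℕ) (hn : 2 ≤ n) : TL R u n :=
  toTL R u n (sB n ⟨0, by omega⟩)

/-- The element `σ₁⁻¹` of `TL_{1,n}`, the image of the inverse braid
generator (needs `2 ≤ n`). -/
noncomputable def σ₁invT (n : ℕ) (hn : 2 ≤ n) : TL R u n :=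
  toTL R u n (sB n ⟨0, by omega⟩)⁻¹

/-- The looping element `t₁ = σ₁ t σ₁` of `TL_{1,n}` (needs `2 ≤ n`). -/
noncomputable def t₁T (n : ℕ) (hn : 2 ≤ n) : TL R u n :=
  toTL R u n (sB n ⟨0, by omega⟩ * tB n * sB n ⟨0, by omega⟩)

/-- The variable `u`, as a unit of the field `ℚ(u) = RatFunc ℚ`. -/
noncomputable def uX : (RatFunc ℚ)ˣ := Units.mk0 RatFunc.X RatFunc.X_ne_zero

/-!
The trace property and the quadratic Hecke relation give
`f(t₁) = f(t σ₁²) = (u - u⁻¹) f(t σ₁) + f(t)`, and the Markov rule turns this into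
`u⁴ f(t₁) = u²(1 + u⁴)/(1 + u²) · f(t)`. So `f(t) = u⁴ f(t₁)` forces
`(1 - u⁶)/(1 + u²) · f(t) = 0`, and the scalar is nonzero in `ℚ(u)`.
-/

theorem toHecke_sB_mul_self (n : ℕ) (i : Fin (n - 1)) :
    toHecke R u n (sB n i) * toHecke R u n (sB n i)
      = ((u : R) - ((u⁻¹ : Rˣ) : R)) • toHecke R u n (sB n i) + 1 := by
  have h := RingQuot.mkAlgHom_rel R (heckeRel.quad (u := u) i)
  simp only [map_mul, map_add, map_one, map_smul] at h
  rw [← RingHom.coe_coe (RingQuot.mkAlgHom R _), RingQuot.mkAlgHom_coe] at h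
  simpa [toHecke] using h

theorem toTL_sB_mul_self (n : ℕ) (i : Fin (n - 1)) :
    toTL R u n (sB n i) * toTL R u n (sB n i)
      = ((u : R) - ((u⁻¹ : Rˣ) : R)) • toTL R u n (sB n i) + 1 := by
  have h := congrArg (RingQuot.mkAlgHom R (tlRel R u n)) (toHecke_sB_mul_self R u n i)
  simp only [map_mul, map_add, map_one, map_smul] at h
  rw [← RingHom.coe_coe (RingQuot.mkAlgHom R _), RingQuot.mkAlgHom_coe] at h
  simpa [toTL] using h

theorem σ₁T_mul_self (n : ℕ) (hn : 2 ≤ n) :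
    σ₁T R u n hn * σ₁T R u n hn = ((u : R) - ((u⁻¹ : Rˣ) : R)) • σ₁T R u n hn + 1 :=
  toTL_sB_mul_self R u n _

theorem t₁T_eq (n : ℕ) (hn : 2 ≤ n) :
    t₁T R u n hn = σ₁T R u n hn * tT R u n * σ₁T R u n hn := by
  simp only [t₁T, σ₁T, tT, map_mul]

theorem LinearMap.apply_mul_mul_of_mul_self_eq {k A M : Type*} [CommRing k] [Ring A]
    [Algebra k A] [AddCommGroup M] [Module k M] (f : A →ₗ[k] M)
    (hf : ∀ a b, f (a * b) = f (b * a)) {s : A} {c : k} (hs : s * s = c • s + 1) (a : A) :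
    f (s * a * s) = c • f (a * s) + f a := by
  rw [mul_assoc, hf, mul_assoc, hs, mul_add, mul_one, mul_smul_comm, map_add, map_smul]

theorem RatFunc.X_pow_ne_C {K : Type*} [Field K] {n : ℕ} (hn : 0 < n) (a : K) :
    (RatFunc.X : RatFunc K) ^ n ≠ RatFunc.C a := by
  rw [← RatFunc.algebraMap_X, ← RatFunc.algebraMap_C, ← map_pow, Ne,
    (RatFunc.algebraMap_injective K).eq_iff, ← sub_eq_zero]
  exact Polynomial.X_pow_sub_C_ne_zero hn a

-- the left-hand side equals `x²(1 + x⁴)/(1 + x²)`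
theorem pow_four_mul_sub_inv_mul_add_one_ne_one {K : Type*} [Field K] {x : K}
    (hx : x ≠ 0) (h2 : 1 + x ^ 2 ≠ 0) (h6 : x ^ 6 ≠ 1) :
    x ^ 4 * ((x - x⁻¹) * (-1 / (x * (1 + x ^ 2))) + 1) ≠ 1 := by
  intro h
  field_simp at h
  exact h6 (by linear_combination h)

/-- Over `R = ℚ(u)`, if the conjugation-invariant functional `f` on `TL_{1,2}`
satisfies the Markov rule `f(tσ₁) = (−1/(u(1+u²)))·f(t)` and moreover
`f(t) = u⁴·f(t₁)`, then `f(t) = 0`: the positive and negative braid band move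
equations on `t` are not simultaneously satisfiable nontrivially. -/
theorem bbm_not_equivalent (M : Type) [AddCommGroup M] [Module (RatFunc ℚ) M]
    (f : TL (RatFunc ℚ) uX 2 →ₗ[RatFunc ℚ] M)
    (hf : ∀ a b : TL (RatFunc ℚ) uX 2, f (a * b) = f (b * a))
    (hmarkov : f (tT (RatFunc ℚ) uX 2 * σ₁T (RatFunc ℚ) uX 2 le_rfl)
      = ((-1 : RatFunc ℚ) / (RatFunc.X * (1 + RatFunc.X ^ 2))) • f (tT (RatFunc ℚ) uX 2))
    (heq : f (tT (RatFunc ℚ) uX 2)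
      = (RatFunc.X ^ 4 : RatFunc ℚ) • f (t₁T (RatFunc ℚ) uX 2 le_rfl)) :
    f (tT (RatFunc ℚ) uX 2) = 0 := by
  set X : RatFunc ℚ := RatFunc.X
  set T := tT (RatFunc ℚ) uX 2
  set S := σ₁T (RatFunc ℚ) uX 2 le_rfl
  have hsq : S * S = (X - X⁻¹) • S + 1 := by
    rw [σ₁T_mul_self, Units.val_inv_eq_inv_val]
    rfl
  rw [t₁T_eq, f.apply_mul_mul_of_mul_self_eq hf hsq T, hmarkov, smul_smul] at heq
  have hcoeff : X ^ 4 * ((X - X⁻¹) * (-1 / (X * (1 + X ^ 2))) + 1) ≠ 1 := by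
    refine pow_four_mul_sub_inv_mul_add_one_ne_one RatFunc.X_ne_zero (fun h => ?_) ?_
    · exact RatFunc.X_pow_ne_C two_pos (-1 : ℚ) (by rw [map_neg, map_one]; linear_combination h)
    · simpa using RatFunc.X_pow_ne_C (by norm_num : 0 < 6) (1 : ℚ)
  have hzero : (X ^ 4 * ((X - X⁻¹) * (-1 / (X * (1 + X ^ 2))) + 1) - 1) • f T = 0 := by
    rw [sub_smul, one_smul, mul_smul, add_smul, one_smul, ← heq, sub_self]
  exact (smul_eq_zero.mp hzero).resolve_left (sub_ne_zero.mpr hcoeff)
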